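/- arXiv:2602.16202 — 2 statements merged into one kernel-verified Lean document; each statement's English description precedes it below -/
import Mathlib

section
/- Every ρ-invariant monomial y₁^{n₁} ⋯ y_{d−1}^{n_{d−1}} (i.e., with ∑ k·n_k ≡ 0 mod d) of degree ∑ n_k > d can be written as a product of two ρ-invariant monomials of strictly smaller positive degree. Consequently the submonoid of invariant monomials is generated by the invariant monomials of degree at most d. -/
/-!
Write the monomial as a word in the variables and look at the residues mod `d` of the weights
of its first `0, 1, …, d` letters. By pigeonhole two of these `d + 1` prefix weights agree, so
the factor between them is an invariant monomial of degree between `1` and `d`, and its cofactor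
is invariant of positive degree. The argument works for weights in any finite abelian group `G`,
with `|G|` in place of `d`.
-/

open Finset

section ZeroSum

variable {α G : Type*} [AddCommGroup G] [Fintype G]

theorem List.exists_infix_sum_map_eq_zero (l : List α) (f : α → G)
    (hl : Fintype.card G ≤ l.length) :
    ∃ t, t <:+: l ∧ t ≠ [] ∧ t.length ≤ Fintype.card G ∧ (t.map f).sum = 0 := by
  let prefixSum : Fin (Fintype.card G + 1) → G := fun i => ((l.take i).map f).sum
  obtain ⟨i, j, hij, hsum⟩ :=
    Fintype.exists_ne_map_eq_of_card_lt prefixSum (by simp)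
  wlog hlt : i < j generalizing i j
  · exact this j i hij.symm hsum.symm (lt_of_le_of_ne (not_lt.1 hlt) hij.symm)
  have hsplit : l.take i ++ (l.take j).drop i = l.take j := by
    simpa [List.take_take, min_eq_left (Fin.le_def.1 hlt.le)] using
      List.take_append_drop (i : ℕ) (l.take j)
  refine ⟨(l.take j).drop i,
    (List.drop_suffix _ _).isInfix.trans (List.take_prefix _ _).isInfix, ?_, ?_, ?_⟩
  · rw [← List.length_pos_iff]
    simp only [List.length_drop, List.length_take]
    omega
  · simp only [List.length_drop, List.length_take]
    omega
  · have := congrArg (fun l' => (l'.map f).sum) hsplit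
    simp only [List.map_append, List.sum_append] at this
    exact add_eq_left.1 (this.trans hsum.symm)

theorem Multiset.exists_le_sum_map_eq_zero (s : Multiset α) (f : α → G)
    (hs : Fintype.card G ≤ Multiset.card s) :
    ∃ t ≤ s, t ≠ 0 ∧ Multiset.card t ≤ Fintype.card G ∧ (t.map f).sum = 0 := by
  induction s using Quot.induction_on with
  | h l =>
    obtain ⟨t, htl, ht, hcard, hsum⟩ := l.exists_infix_sum_map_eq_zero f hs
    exact ⟨t, Multiset.coe_le.2 htl.sublist.subperm, by simpa using ht, by simpa using hcard,
      by simpa using hsum⟩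

end ZeroSum

theorem Multiset.sum_map_eq_sum_count_nsmul {α M : Type*} [Fintype α] [DecidableEq α]
    [AddCommMonoid M] (s : Multiset α) (f : α → M) :
    (s.map f).sum = ∑ a, s.count a • f a := by
  rw [Finset.sum_multiset_map_count]
  exact Finset.sum_subset (subset_univ _) fun a _ ha => by
    rw [Multiset.count_eq_zero.2 (by simpa using ha), zero_smul]

section ExponentVector

variable {ι G : Type*} [Fintype ι] [AddCommGroup G] [Fintype G] (w : ι → G)

theorem exists_add_eq_of_linearCombination_eq_zero_of_card_lt (n : ι → ℕ)
    (hn : Fintype.linearCombination ℕ w n = 0) (hdeg : Fintype.card G < ∑ i, n i) :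
    ∃ n' n'' : ι → ℕ, n = n' + n'' ∧
      Fintype.linearCombination ℕ w n' = 0 ∧ Fintype.linearCombination ℕ w n'' = 0 ∧
      0 < ∑ i, n' i ∧ 0 < ∑ i, n'' i := by
  classical
  let s : Multiset ι := Finsupp.toMultiset (Finsupp.equivFunOnFinite.symm n)
  have hcount : ∀ i, s.count i = n i := by simp [s]
  have hcard : Multiset.card s = ∑ i, n i := by
    simp_rw [← hcount, Multiset.sum_count_eq_card fun i _ => mem_univ i]
  obtain ⟨t, hts, ht, htcard, htsum⟩ := s.exists_le_sum_map_eq_zero w (by omega)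
  let n' : ι → ℕ := fun i => t.count i
  have hle : n' ≤ n := fun i => hcount i ▸ Multiset.count_le_of_le i hts
  have hsplit : n = n' + (n - n') := (add_tsub_cancel_of_le hle).symm
  have hn' : Fintype.linearCombination ℕ w n' = 0 := by
    rwa [Fintype.linearCombination_apply, ← Multiset.sum_map_eq_sum_count_nsmul]
  have hdeg' : ∑ i, n' i = Multiset.card t := Multiset.sum_count_eq_card fun i _ => mem_univ i
  have hdeg_add : ∑ i, n i = ∑ i, n' i + ∑ i, (n - n') i := by
    rw [← sum_add_distrib]; exact congrArg (∑ i, · i) hsplit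
  refine ⟨n', n - n', hsplit, hn', ?_, ?_, ?_⟩
  · simpa [hn, hn'] using (congrArg (Fintype.linearCombination ℕ w) hsplit).symm
  · exact hdeg' ▸ Multiset.card_pos.2 ht
  · omega

theorem mem_closure_of_linearCombination_eq_zero (n : ι → ℕ)
    (hn : Fintype.linearCombination ℕ w n = 0) :
    n ∈ AddSubmonoid.closure
      {m | Fintype.linearCombination ℕ w m = 0 ∧ ∑ i, m i ≤ Fintype.card G} := by
  induction hdeg : ∑ i, n i using Nat.strong_induction_on generalizing n with
  | _ N ih =>
    by_cases hle : N ≤ Fintype.card G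
    · exact AddSubmonoid.subset_closure ⟨hn, hdeg ▸ hle⟩
    obtain ⟨n', n'', rfl, hn', hn'', hpos', hpos''⟩ :=
      exists_add_eq_of_linearCombination_eq_zero_of_card_lt w n hn (by omega)
    rw [Pi.add_def, sum_add_distrib] at hdeg
    exact add_mem (ih _ (by omega) n' hn' rfl) (ih _ (by omega) n'' hn'' rfl)

end ExponentVector

theorem dvd_sum_mul_iff_linearCombination_eq_zero {d : ℕ} (n : Fin d → ℕ) :
    d ∣ ∑ k : Fin d, (k : ℕ) * n k ↔
      Fintype.linearCombination ℕ (fun k : Fin d => ((k : ℕ) : ZMod d)) n = 0 := by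
  rw [← ZMod.natCast_eq_zero_iff, Fintype.linearCombination_apply]
  push_cast
  simp_rw [nsmul_eq_mul, mul_comm]

/-- Every invariant exponent vector `n` (i.e. with `d ∣ ∑ k·n k`) of total degree
`> d` splits as a sum of two invariant exponent vectors of positive degree; hence
the additive monoid of invariant exponent vectors is generated by those of
degree at most `d`. -/
theorem stmt_12 (d : ℕ) (hd : 2 ≤ d) :
    (∀ n : Fin d → ℕ, (d ∣ ∑ k : Fin d, (k : ℕ) * n k) → d < ∑ k : Fin d, n k →
      ∃ n' n'' : Fin d → ℕ, n = n' + n'' ∧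
        (d ∣ ∑ k : Fin d, (k : ℕ) * n' k) ∧ (d ∣ ∑ k : Fin d, (k : ℕ) * n'' k) ∧
        0 < ∑ k : Fin d, n' k ∧ 0 < ∑ k : Fin d, n'' k) ∧
    (∀ n : Fin d → ℕ, (d ∣ ∑ k : Fin d, (k : ℕ) * n k) →
      n ∈ AddSubmonoid.closure
        {m : Fin d → ℕ | (d ∣ ∑ k : Fin d, (k : ℕ) * m k) ∧ ∑ k : Fin d, m k ≤ d}) := by
  have : NeZero d := ⟨by omega⟩
  simp_rw [dvd_sum_mul_iff_linearCombination_eq_zero]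
  refine ⟨fun n hn hdeg => ?_, fun n hn => ?_⟩
  · exact exists_add_eq_of_linearCombination_eq_zero_of_card_lt _ n hn (by rwa [ZMod.card])
  · simpa only [ZMod.card] using mem_closure_of_linearCombination_eq_zero _ n hn
end

section
/- Let M be the free monoid on an alphabet A and φ : M → G a monoid homomorphism to a group G. Then the submonoid φ⁻¹(1) is a free monoid; its free generating set consists of the nonempty words w ∈ φ⁻¹(1) none of whose proper nonempty prefixes lies in φ⁻¹(1). -/
open Classical in
private lemma stmt_19_exists {A G : Type*} [Group G] (φ : FreeMonoid A →* G) :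
    ∀ n (w : FreeMonoid A), w.toList.length ≤ n → φ w = 1 →
      ∃ f : List (FreeMonoid A), f.prod = w ∧
        ∀ u ∈ f, φ u = 1 ∧ u ≠ 1 ∧
          ∀ p : FreeMonoid A, p.toList <+: u.toList → p ≠ 1 → p ≠ u → φ p ≠ 1 := by
  intro n
  induction n with
  | zero =>
    intro w hw _
    have : w.toList = [] := List.eq_nil_of_length_eq_zero (Nat.le_zero.mp hw)
    have hw1 : w = 1 := FreeMonoid.toList.injective this
    exact ⟨[], by simp [hw1], by simp⟩
  | succ n ih =>
    intro w hw hφ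
    by_cases hw1 : w = 1
    · exact ⟨[], by simp [hw1], by simp⟩
    · have hlen : 0 < w.toList.length := by
        rcases Nat.eq_zero_or_pos w.toList.length with h | h
        · exact absurd (FreeMonoid.toList.injective (List.eq_nil_of_length_eq_zero h)) hw1
        · exact h
      set P : ℕ → Prop := fun k => 0 < k ∧ φ (FreeMonoid.ofList (w.toList.take k)) = 1 with hP
      have hPw : P w.toList.length := by
        constructor
        · exact hlen
        · rw [List.take_length]
          simpa using hφ
      have hex : ∃ k, P k := ⟨_, hPw⟩
      set m := Nat.find hex with hm
      obtain ⟨hm0, hmφ⟩ := Nat.find_spec hex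
      have hmle : m ≤ w.toList.length := Nat.find_le hPw
      set p := FreeMonoid.ofList (w.toList.take m) with hpdef
      set q := FreeMonoid.ofList (w.toList.drop m) with hqdef
      have hpq : p * q = w := by
        apply FreeMonoid.toList.injective
        simp [hpdef, hqdef]
      have hplen : p.toList.length = m := by
        simp [hpdef, Nat.min_eq_left hmle]
      have hφq : φ q = 1 := by
        have := map_mul φ p q
        rw [hpq, hφ, hmφ] at this
        simpa using this.symm
      have hqlen : q.toList.length ≤ n := by
        have : q.toList.length = w.toList.length - m := by simp [hqdef]
        omega
      obtain ⟨f, hf, hfgen⟩ := ih q hqlen hφq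
      refine ⟨p :: f, by simp [hf, hpq], ?_⟩
      intro u hu
      rcases List.mem_cons.mp hu with rfl | hu
      · refine ⟨hmφ, ?_, ?_⟩
        · intro h
          rw [h] at hplen
          simp at hplen; omega
        · intro r hr hr1 hrp
          set k := r.toList.length with hk
          have hk0 : 0 < k := by
            rcases Nat.eq_zero_or_pos k with h | h
            · exact absurd (FreeMonoid.toList.injective (List.eq_nil_of_length_eq_zero h)) hr1
            · exact h
          have hkle : k ≤ m := by
            have := hr.length_le
            omega
          have hrtake : r.toList = w.toList.take k := by
            have := List.prefix_iff_eq_take.mp hr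
            rw [this, hpdef]
            simp [List.take_take, Nat.min_eq_left hkle]
            omega
          have hklt : k < m := by
            rcases Nat.lt_or_ge k m with h | h
            · exact h
            · exfalso
              have : k = m := le_antisymm hkle h
              apply hrp
              apply FreeMonoid.toList.injective
              rw [hrtake, this, hpdef]
              simp
          have := Nat.find_min hex hklt
          intro hc
          exact this ⟨hk0, by rw [← hrtake]; simpa using hc⟩
      · exact hfgen u hu

private lemma stmt_19_unique {A G : Type*} [Group G] (φ : FreeMonoid A →* G) :
    ∀ f g : List (FreeMonoid A),
      (∀ u ∈ f, φ u = 1 ∧ u ≠ 1 ∧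
          ∀ p : FreeMonoid A, p.toList <+: u.toList → p ≠ 1 → p ≠ u → φ p ≠ 1) →
      (∀ u ∈ g, φ u = 1 ∧ u ≠ 1 ∧
          ∀ p : FreeMonoid A, p.toList <+: u.toList → p ≠ 1 → p ≠ u → φ p ≠ 1) →
      f.prod = g.prod → f = g := by
  intro f
  induction f with
  | nil =>
    intro g _ hg hprod
    cases g with
    | nil => rfl
    | cons v g' =>
      exfalso
      obtain ⟨_, hv1, _⟩ := hg v List.mem_cons_self
      apply hv1
      have : (v :: g').prod.toList = ([] : List (FreeMonoid A)).prod.toList := by rw [← hprod]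
      simp at this
      exact FreeMonoid.toList.injective this.1
  | cons u f' ihf =>
    intro g hf hg hprod
    cases g with
    | nil =>
      exfalso
      obtain ⟨_, hu1, _⟩ := hf u List.mem_cons_self
      apply hu1
      have : (u :: f').prod.toList = ([] : List (FreeMonoid A)).prod.toList := by rw [hprod]
      simp at this
      exact FreeMonoid.toList.injective this.1
    | cons v g' =>
      obtain ⟨huφ, hu1, hugen⟩ := hf u List.mem_cons_self
      obtain ⟨hvφ, hv1, hvgen⟩ := hg v List.mem_cons_self
      have hkey : u = v := by
        have h1 : u.toList <+: (u :: f').prod.toList := by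
          simp [List.prefix_append]
        have h2 : v.toList <+: (u :: f').prod.toList := by
          rw [hprod]; simp [List.prefix_append]
        rcases List.prefix_or_prefix_of_prefix h1 h2 with h | h
        · by_contra hne
          exact hvgen u h hu1 hne huφ |>.elim
        · by_contra hne
          exact hugen v h hv1 (fun e => hne e.symm) hvφ |>.elim
      subst hkey
      have : f'.prod = g'.prod := by
        have h : u.toList ++ f'.prod.toList = u.toList ++ g'.prod.toList := by
          have := hprod
          simp only [List.prod_cons] at this
          have := congrArg FreeMonoid.toList this
          simpa using this
        exact FreeMonoid.toList.injective (List.append_cancel_left h)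
      have := ihf g' (fun x hx => hf x (List.mem_cons_of_mem _ hx))
        (fun x hx => hg x (List.mem_cons_of_mem _ hx)) this
      rw [this]

/-- For a monoid homomorphism `φ` from a free monoid to a group `G`, the
submonoid `φ⁻¹(1)` is a free monoid: every nonempty element of `φ⁻¹(1)` factors
uniquely as a product of elements of `φ⁻¹(1)` having no proper nonempty prefix
in `φ⁻¹(1)`. -/
theorem stmt_19 (A G : Type*) [Group G] (φ : FreeMonoid A →* G) :
    ∀ w : FreeMonoid A, w ≠ 1 → φ w = 1 →
      ∃! f : List (FreeMonoid A), f.prod = w ∧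
        ∀ u ∈ f, φ u = 1 ∧ u ≠ 1 ∧
          ∀ p : FreeMonoid A, p.toList <+: u.toList → p ≠ 1 → p ≠ u → φ p ≠ 1 := by
  intro w _ hφ
  obtain ⟨f, hf, hfgen⟩ := stmt_19_exists φ w.toList.length w le_rfl hφ
  refine ⟨f, ⟨hf, hfgen⟩, ?_⟩
  intro g ⟨hg, hggen⟩
  exact stmt_19_unique φ g f hggen hfgen (by rw [hg, hf])
end
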